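/- arXiv:1605.07659 — 2 statements merged into one kernel-verified Lean document; each statement's English description precedes it below -/
import Mathlib

section
/- Let L_n : ℝ^p → ℝ, let L : ℝ^p → ℝ, and let V_n, c > 0. Define R_n(w) = L_n(w) + (c V_n/2)‖w‖². Suppose w* minimizes L over ℝ^p, w_n* minimizes R_n over ℝ^p, and sup_w |L(w) - L_n(w)| ≤ V_n. Then ‖w_n*‖² ≤ 4/c + ‖w*‖². -/
theorem regularized_minimizer_norm_bound (p : ℕ)
    (Ln L : EuclideanSpace ℝ (Fin p) → ℝ) (Vn c : ℝ)
    (hVn : 0 < Vn) (hc : 0 < c)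
    (Rn : EuclideanSpace ℝ (Fin p) → ℝ)
    (hRn : ∀ w, Rn w = Ln w + (c * Vn / 2) * ‖w‖ ^ 2)
    (wstar wnstar : EuclideanSpace ℝ (Fin p))
    (hwstar : ∀ w, L wstar ≤ L w)
    (hwnstar : ∀ w, Rn wnstar ≤ Rn w)
    (hdev : ∀ w, |L w - Ln w| ≤ Vn) :
    ‖wnstar‖ ^ 2 ≤ 4 / c + ‖wstar‖ ^ 2 := by
  have h1 := hwnstar wstar
  rw [hRn, hRn] at h1
  have h2 := abs_le.mp (hdev wnstar)
  have h3 := abs_le.mp (hdev wstar)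
  have h4 := hwstar wnstar
  have key : (c * Vn / 2) * ‖wnstar‖ ^ 2 ≤ 2 * Vn + (c * Vn / 2) * ‖wstar‖ ^ 2 := by
    nlinarith [h2.1, h2.2, h3.1, h3.2]
  have hcV : 0 < c * Vn / 2 := by positivity
  rw [div_add' _ _ _ (ne_of_gt hc)]
  rw [le_div_iff₀ hc]
  nlinarith [key]
end

section
/- Let R_m, R_n : ℝ^p → ℝ with R_k(w) = L_k(w) + (cV_k/2)‖w‖², where V_n < V_m. Suppose w_m satisfies R_m(w_m) - R_m(w_m*) ≤ V_m where w_m* minimizes R_m, w_n* minimizes R_n, |L_n(w) - L_m(w)| ≤ D for all w (with D = ((n-m)/n)(V_{n-m}+V_m)), and ‖w_n*‖² ≤ 4/c + ‖w*‖². Then R_n(w_m) - R_n(w_n*) ≤ V_m + 2D + 2(V_m - V_n) + (c(V_m - V_n)/2)‖w*‖². -/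
theorem risk_suboptimality_transfer (p : ℕ)
    (Lm Ln : EuclideanSpace ℝ (Fin p) → ℝ) (c Vm Vn D : ℝ)
    (hc : 0 < c) (hVn : 0 < Vn) (hVnm : Vn < Vm) (hD : 0 ≤ D)
    (Rm Rn : EuclideanSpace ℝ (Fin p) → ℝ)
    (hRm : ∀ w, Rm w = Lm w + (c * Vm / 2) * ‖w‖ ^ 2)
    (hRn : ∀ w, Rn w = Ln w + (c * Vn / 2) * ‖w‖ ^ 2)
    (wm wmstar wnstar wstar : EuclideanSpace ℝ (Fin p))
    (hwmstar : ∀ w, Rm wmstar ≤ Rm w)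
    (hwnstar : ∀ w, Rn wnstar ≤ Rn w)
    (hwm : Rm wm - Rm wmstar ≤ Vm)
    (hdev : ∀ w, |Ln w - Lm w| ≤ D)
    (hnorm : ‖wnstar‖ ^ 2 ≤ 4 / c + ‖wstar‖ ^ 2) :
    Rn wm - Rn wnstar ≤
      Vm + 2 * D + 2 * (Vm - Vn) + (c * (Vm - Vn) / 2) * ‖wstar‖ ^ 2 := by
  have h1 := hdev wm
  have h2 := hdev wnstar
  rw [abs_le] at h1 h2
  have h3 := hwmstar wnstar
  have key : c * (Vm - Vn) / 2 * ‖wnstar‖ ^ 2 ≤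
      c * (Vm - Vn) / 2 * (4 / c + ‖wstar‖ ^ 2) := by
    apply mul_le_mul_of_nonneg_left hnorm
    nlinarith
  have hc4 : c * (Vm - Vn) / 2 * (4 / c) = 2 * (Vm - Vn) := by
    field_simp; ring
  have hwm2 : (0:ℝ) ≤ ‖wm‖ ^ 2 := by positivity
  have e1 := hRm wm; have e2 := hRn wm; have e3 := hRm wmstar
  have e4 := hRm wnstar; have e5 := hRn wnstar
  nlinarith [mul_nonneg (mul_nonneg hc.le (sub_pos.mpr hVnm).le) hwm2]
end
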